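/- Any feasible solution x of the linear program for T(n,1) has objective value at most 4n. Precisely: suppose x assigns a nonnegative real x_s ≤ |s| to each binary string s of length ≤ n, and satisfies ∑_{s∈K₁K₂} x_s ≤ ∑_{s∈K₁} x_s + ∑_{s∈K₂} x_s for all pairs (K₁,K₂) of languages with K₁, K₂, K₁K₂ in the closure C(T(n,1)). Then ∑_{s∈T(n,1)} x_s ≤ 4n. -/

import Mathlib

/-- All binary strings of length `n`. -/
def binStrings (n : ℕ) : Finset (List Bool) :=
  (Finset.univ : Finset (Fin n → Bool)).image (fun f => List.ofFn f)

/-- Elementwise concatenation of two sets of strings. -/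
def fcat (A B : Finset (List Bool)) : Finset (List Bool) :=
  (A ×ˢ B).image (fun p => p.1 ++ p.2)

/-- The threshold language `T(n,k)`: binary strings of length `n` with at least `k` ones. -/
def thresh (n k : ℕ) : Finset (List Bool) :=
  (binStrings n).filter (fun s => k ≤ s.count true)

lemma mem_binStrings {m : ℕ} {s : List Bool} : s ∈ binStrings m ↔ s.length = m := by
  simp only [binStrings, Finset.mem_image, Finset.mem_univ, true_and]
  constructor
  · rintro ⟨f, rfl⟩; simp
  · rintro rfl
    exact ⟨s.get, List.ofFn_get s⟩

lemma mem_fcat {A B : Finset (List Bool)} {s : List Bool} :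
    s ∈ fcat A B ↔ ∃ a ∈ A, ∃ b ∈ B, a ++ b = s := by
  simp [fcat, Finset.mem_image, Finset.mem_product]
  tauto

lemma mem_thresh {n k : ℕ} {s : List Bool} :
    s ∈ thresh n k ↔ s.length = n ∧ k ≤ s.count true := by
  simp [thresh, mem_binStrings]

lemma binStrings_nonempty (m : ℕ) : (binStrings m).Nonempty :=
  ⟨List.replicate m false, mem_binStrings.mpr List.length_replicate⟩

lemma thresh_nonempty {m : ℕ} (hm : 1 ≤ m) : (thresh m 1).Nonempty := by
  refine ⟨List.replicate m true, mem_thresh.mpr ⟨List.length_replicate, ?_⟩⟩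
  simpa using hm

lemma fcat_binStrings (a b : ℕ) :
    fcat (binStrings a) (binStrings b) = binStrings (a + b) := by
  ext s
  simp only [mem_fcat, mem_binStrings]
  constructor
  · rintro ⟨u, hu, v, hv, rfl⟩; simp [hu, hv]
  · intro h
    exact ⟨s.take a, by simp [h], s.drop a, by simp [h], List.take_append_drop a s⟩

lemma thresh_split {n : ℕ} (hn : 2 ≤ n) :
    thresh n 1 = fcat (binStrings 1) (thresh (n-1) 1) ∪ fcat (thresh 1 1) (binStrings (n-1)) := by
  ext s
  simp only [Finset.mem_union, mem_fcat, mem_thresh, mem_binStrings]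
  constructor
  · rintro ⟨hl, hc⟩
    rcases Nat.lt_or_ge 0 ((s.drop 1).count true) with h | h
    · left
      refine ⟨s.take 1, by simp [hl]; omega, s.drop 1, ⟨by simp [hl], h⟩, List.take_append_drop 1 s⟩
    · right
      refine ⟨s.take 1, ⟨by simp [hl]; omega, ?_⟩, s.drop 1, by simp [hl], List.take_append_drop 1 s⟩
      have := List.take_append_drop 1 s
      have hcc : (s.take 1).count true + (s.drop 1).count true = s.count true := by
        rw [← List.count_append, this]
      omega
  · rintro (⟨u, hu, v, ⟨hv1, hv2⟩, rfl⟩ | ⟨u, ⟨hu1, hu2⟩, v, hv, rfl⟩) <;>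
      simp [List.count_append] <;> omega

/-- The regular-expression closure `C(L)` of a language `L`. -/
inductive Closure (L : Finset (List Bool)) : Finset (List Bool) → Prop
  | base : Closure L L
  | catLeft {K₁ K₂ : Finset (List Bool)} : Closure L (fcat K₁ K₂) →
      K₁.Nonempty → K₂.Nonempty → Closure L K₁
  | catRight {K₁ K₂ : Finset (List Bool)} : Closure L (fcat K₁ K₂) →
      K₁.Nonempty → K₂.Nonempty → Closure L K₂
  | unionLeft {K₁ K₂ : Finset (List Bool)} : Closure L (K₁ ∪ K₂) →
      K₁.Nonempty → K₂.Nonempty → Closure L K₁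
  | unionRight {K₁ K₂ : Finset (List Bool)} : Closure L (K₁ ∪ K₂) →
      K₁.Nonempty → K₂.Nonempty → Closure L K₂

theorem thresh_lp_objective_le (n : ℕ) (hn : 0 < n) (x : List Bool → ℝ)
    (hbound : ∀ s : List Bool, s.length ≤ n → 0 ≤ x s ∧ x s ≤ (s.length : ℝ))
    (hconcat : ∀ K₁ K₂ : Finset (List Bool),
      Closure (thresh n 1) K₁ → Closure (thresh n 1) K₂ →
      Closure (thresh n 1) (fcat K₁ K₂) →
      ∑ s ∈ fcat K₁ K₂, x s ≤ ∑ s ∈ K₁, x s + ∑ s ∈ K₂, x s) :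
    ∑ s ∈ thresh n 1, x s ≤ 4 * n := by
  -- sums over binStrings m (with Closure) are ≤ 2m
  have hbin : ∀ m : ℕ, 1 ≤ m → m ≤ n → Closure (thresh n 1) (binStrings m) →
      ∑ s ∈ binStrings m, x s ≤ 2 * m := by
    intro m
    induction m using Nat.strong_induction_on with
    | _ m ih =>
      intro hm1 hmn hC
      rcases eq_or_lt_of_le hm1 with h1 | h2
      · -- m = 1
        have hb1 : binStrings 1 = {[false], [true]} := by decide
        rw [← h1, hb1]
        have hf := hbound [false] (by simp; omega)
        have ht := hbound [true] (by simp; omega)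
        rw [Finset.sum_insert (by decide), Finset.sum_singleton]
        push_cast
        simp only [List.length_cons, List.length_nil] at hf ht
        push_cast at hf ht
        linarith
      · -- m ≥ 2
        have hsplit : fcat (binStrings 1) (binStrings (m-1)) = binStrings m := by
          rw [fcat_binStrings]; congr 1; omega
        have hCm : Closure (thresh n 1) (fcat (binStrings 1) (binStrings (m-1))) := by
          rwa [hsplit]
        have hC1 : Closure (thresh n 1) (binStrings 1) :=
          .catLeft hCm (binStrings_nonempty _) (binStrings_nonempty _)
        have hC2 : Closure (thresh n 1) (binStrings (m-1)) :=
          .catRight hCm (binStrings_nonempty _) (binStrings_nonempty _)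
        have h := hconcat _ _ hC1 hC2 hCm
        rw [hsplit] at h
        have ih1 := ih 1 (by omega) le_rfl (by omega) hC1
        have ih2 := ih (m-1) (by omega) (by omega) (by omega) hC2
        have hc : ((m-1 : ℕ) : ℝ) = (m : ℝ) - 1 := by
          rw [Nat.cast_sub hm1]; norm_num
        rw [hc] at ih2
        norm_num at ih1
        linarith
  -- main case split
  rcases eq_or_lt_of_le (show 1 ≤ n from hn) with h1 | h2
  · -- n = 1
    have ht1 : thresh 1 1 = {[true]} := by decide
    rw [← h1, ht1, Finset.sum_singleton]
    have := hbound [true] (by simp; omega)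
    simp only [List.length_cons, List.length_nil] at this
    push_cast at this ⊢
    linarith
  · -- n ≥ 2
    have hn2 : 2 ≤ n := h2
    set A := fcat (binStrings 1) (thresh (n-1) 1) with hA
    set B := fcat (thresh 1 1) (binStrings (n-1)) with hB
    have hsplit : thresh n 1 = A ∪ B := thresh_split hn2
    have hAne : A.Nonempty := by
      rcases thresh_nonempty (m := n-1) (by omega) with ⟨v, hv⟩
      exact ⟨[false] ++ v, mem_fcat.mpr ⟨[false], by decide, v, hv, rfl⟩⟩
    have hBne : B.Nonempty := by
      rcases binStrings_nonempty (n-1) with ⟨v, hv⟩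
      exact ⟨[true] ++ v, mem_fcat.mpr ⟨[true], by decide, v, hv, rfl⟩⟩
    have hCU : Closure (thresh n 1) (A ∪ B) := by rw [← hsplit]; exact .base
    have hCA : Closure (thresh n 1) A := .unionLeft hCU hAne hBne
    have hCB : Closure (thresh n 1) B := .unionRight hCU hAne hBne
    have hC1 : Closure (thresh n 1) (binStrings 1) :=
      .catLeft (hA ▸ hCA) (binStrings_nonempty _) (thresh_nonempty (by omega))
    have hCT : Closure (thresh n 1) (thresh (n-1) 1) :=
      .catRight (hA ▸ hCA) (binStrings_nonempty _) (thresh_nonempty (by omega))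
    have hCt1 : Closure (thresh n 1) (thresh 1 1) :=
      .catLeft (hB ▸ hCB) (thresh_nonempty le_rfl) (binStrings_nonempty _)
    have hCn1 : Closure (thresh n 1) (binStrings (n-1)) :=
      .catRight (hB ▸ hCB) (thresh_nonempty le_rfl) (binStrings_nonempty _)
    -- nonnegativity on strings of length ≤ n
    have hnonneg : ∀ s ∈ thresh n 1, 0 ≤ x s := by
      intro s hs
      exact (hbound s (le_of_eq (mem_thresh.mp hs).1)).1
    -- sum over union
    have hui : ∑ s ∈ A ∪ B, x s + ∑ s ∈ A ∩ B, x s = ∑ s ∈ A, x s + ∑ s ∈ B, x s :=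
      Finset.sum_union_inter
    have hint : 0 ≤ ∑ s ∈ A ∩ B, x s := by
      apply Finset.sum_nonneg
      intro s hs
      apply hnonneg
      rw [hsplit]
      exact Finset.mem_union_left _ (Finset.mem_inter.mp hs).1
    have hstep1 : ∑ s ∈ thresh n 1, x s ≤ ∑ s ∈ A, x s + ∑ s ∈ B, x s := by
      rw [hsplit]; linarith
    -- concatenation inequalities
    have hA' := hconcat _ _ hC1 hCT (hA ▸ hCA)
    have hB' := hconcat _ _ hCt1 hCn1 (hB ▸ hCB)
    rw [← hA] at hA'
    rw [← hB] at hB'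
    -- bounds on pieces
    have hb1 : ∑ s ∈ binStrings 1, x s ≤ 2 := by simpa using hbin 1 le_rfl (by omega) hC1
    have hbn1 : ∑ s ∈ binStrings (n-1), x s ≤ 2 * (n-1 : ℕ) := hbin (n-1) (by omega) (by omega) hCn1
    have hTsub : ∑ s ∈ thresh (n-1) 1, x s ≤ ∑ s ∈ binStrings (n-1), x s := by
      apply Finset.sum_le_sum_of_subset_of_nonneg
      · intro s hs; exact mem_binStrings.mpr (mem_thresh.mp hs).1
      · intro s hs _
        exact (hbound s (by rw [(mem_binStrings.mp hs)]; omega)).1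
    have ht1 : thresh 1 1 = {[true]} := by decide
    have hT1 : ∑ s ∈ thresh 1 1, x s ≤ 1 := by
      rw [ht1, Finset.sum_singleton]
      have := hbound [true] (by simp; omega)
      simpa using this.2
    have hcast : ((n-1 : ℕ) : ℝ) = (n : ℝ) - 1 := by rw [Nat.cast_sub (by omega)]; norm_num
    rw [hcast] at hbn1
    have hnr : (1 : ℝ) ≤ (n : ℝ) := by exact_mod_cast hn
    linarith
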